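/- Let X be a topological space, x₀ ∈ X, n > 1, and A : Xⁿ → X a continuous symmetric unanimous map. Let ρ : X → X be defined via loops: the induced map ρ_* : π₁(X,x₀) → π₁(X,x₀) sending [γ] to A_*([γ],[c],...,[c]) where c is the constant loop. Then n · ρ_*([γ]) = [γ] for all [γ] ∈ π₁(X, x₀), where the multiple is taken in π₁ (which is abelian). -/

import Mathlib

open CategoryTheory

universe u

/-- The homomorphism `π₁(X, x) → π₁(Y, y)` induced by a continuous map `f` with
`f x = y`. -/
noncomputable def piOneMap {X Y : Type u} [TopologicalSpace X] [TopologicalSpace Y]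
    (f : C(X, Y)) (x : X) (y : Y) (h : f x = y) :
    FundamentalGroup X x →* FundamentalGroup Y y :=
  (Iso.conj (eqToIso
      (show FundamentalGroupoid.mk (f x) = FundamentalGroupoid.mk y by
        rw [h]))).toMonoidHom.comp
    ((FundamentalGroupoid.fundamentalGroupoidFunctor.map
      (show TopCat.of X ⟶ TopCat.of Y from TopCat.ofHom f)).mapEnd ⟨x⟩)

/-!
Let `δₖ` be the image of `δ` under the cyclic shift of coordinates by `k`. Symmetry of `A` gives
`A_* δₖ = A_* δ` for every `k`. The element `δₖ` has `γ` in the single coordinate `-k` and `1`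
elsewhere, so the product `δ₀ ⋯ δₙ₋₁` has `γ` in every coordinate; since an element of `π₁(Xⁿ)` is
determined by its coordinates, this product is the diagonal image `Δ_* γ`. Applying `A_*` and
using `A ∘ Δ = id` gives `(A_* δ)ⁿ = A_* (Δ_* γ) = γ`.
-/

lemma List.prod_ofFn_ite_eq {M : Type*} [Monoid M] {n : ℕ} (j : Fin n) (a : M) :
    (List.ofFn fun k => if k = j then a else 1).prod = a := by
  rw [List.ofFn_eq_map, List.prod_map_eq_pow_single j _ (fun k hk _ => if_neg hk), if_pos rfl,
    List.count_eq_one_of_mem (List.nodup_finRange n) (List.mem_finRange j), pow_one]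

section piOneMap

variable {X Y Z : Type u} [TopologicalSpace X] [TopologicalSpace Y] [TopologicalSpace Z]

lemma piOneMap_apply (f : C(X, Y)) {x : X} {y : Y} (h : f x = y) (p : FundamentalGroup X x) :
    piOneMap f x y h p = (p.toPath.map f).cast h.symm h.symm :=
  FundamentalGroup.mapOfEq_apply f h p

/- The basepoint proofs are implicit: as explicit `rfl` arguments they would be elaborated
before the goal fixes the endpoints `y` and `z`. -/
lemma piOneMap_piOneMap (f : C(X, Y)) (g : C(Y, Z)) {h : C(X, Z)} (hgf : g.comp f = h)
    {x : X} {y : Y} {z : Z} {hf : f x = y} {hg : g y = z} {hh : h x = z}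
    (p : FundamentalGroup X x) :
    piOneMap g y z hg (piOneMap f x y hf p) = piOneMap h x z hh p := by
  subst hgf hf hg
  simp only [piOneMap_apply]
  induction p using Quotient.inductionOn
  rfl

lemma piOneMap_piOneMap_of_comp_eq_id (f : C(X, Y)) (g : C(Y, X))
    (hgf : g.comp f = ContinuousMap.id X) {x : X} {y : Y} {hf : f x = y} {hg : g y = x}
    (p : FundamentalGroup X x) :
    piOneMap g y x hg (piOneMap f x y hf p) = p := by
  refine (piOneMap_piOneMap f g hgf (hh := rfl) p).trans ((piOneMap_apply _ _ p).trans ?_)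
  induction p using Quotient.inductionOn
  rfl

end piOneMap

lemma FundamentalGroup.pi_ext {ι : Type} {X : ι → Type u} [∀ i, TopologicalSpace (X i)]
    {c : ∀ i, X i} {p q : FundamentalGroup (∀ i, X i) c}
    (h : ∀ i, piOneMap (ContinuousMap.eval i) c (c i) rfl p =
      piOneMap (ContinuousMap.eval i) c (c i) rfl q) :
    p = q := by
  have hproj : ∀ i (r : FundamentalGroup (∀ i, X i) c),
      Path.Homotopic.proj i r.toPath = piOneMap (ContinuousMap.eval i) c (c i) rfl r := by
    intro i r
    refine Eq.trans ?_ (piOneMap_apply _ _ r).symm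
    induction r using Quotient.inductionOn
    rfl
  calc p = Path.Homotopic.pi fun i => Path.Homotopic.proj i p.toPath :=
        (Path.Homotopic.pi_proj _).symm
    _ = Path.Homotopic.pi fun i => Path.Homotopic.proj i q.toPath := by simp only [hproj, h]
    _ = q := Path.Homotopic.pi_proj _

section cyclicShift

variable {X : Type u} [TopologicalSpace X] {n : ℕ}

def cyclicShift (k : Fin n) : C(Fin n → X, Fin n → X) :=
  ContinuousMap.precomp (· + k)

lemma piOneMap_eval_cyclicShift (i k : Fin n) {x₀ : X}
    (p : FundamentalGroup (Fin n → X) fun _ => x₀) :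
    piOneMap (ContinuousMap.eval i) _ x₀ rfl (piOneMap (cyclicShift k) _ (fun _ => x₀) rfl p) =
      piOneMap (ContinuousMap.eval (i + k)) _ x₀ rfl p :=
  piOneMap_piOneMap (cyclicShift k) (ContinuousMap.eval i) rfl p

lemma prod_ofFn_piOneMap_cyclicShift [NeZero n] {x₀ : X} {γ : FundamentalGroup X x₀}
    {δ : FundamentalGroup (Fin n → X) fun _ => x₀}
    (hδ : ∀ i, piOneMap (ContinuousMap.eval i) _ x₀ rfl δ = if i = 0 then γ else 1) :
    (List.ofFn fun k : Fin n =>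
        piOneMap (cyclicShift k) _ (fun _ => x₀) rfl δ).prod =
      piOneMap (ContinuousMap.constPi (Fin n)) x₀ (fun _ => x₀) rfl γ := by
  refine FundamentalGroup.pi_ext fun i => ?_
  have hdiag : piOneMap (ContinuousMap.eval i) _ x₀ rfl
      (piOneMap (ContinuousMap.constPi (Fin n)) x₀ (fun _ => x₀) rfl γ) = γ :=
    piOneMap_piOneMap_of_comp_eq_id _ _ rfl γ
  refine Eq.trans ?_ hdiag.symm
  rw [map_list_prod, List.map_ofFn]
  have hcoord (k : Fin n) : piOneMap (ContinuousMap.eval i) _ x₀ rfl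
      (piOneMap (cyclicShift k) _ (fun _ => x₀) rfl δ) = if k = -i then γ else 1 := by
    simp only [piOneMap_eval_cyclicShift, hδ, add_eq_zero_iff_eq_neg']
  simp only [Function.comp_def, hcoord]
  exact List.prod_ofFn_ite_eq (-i) γ

end cyclicShift

/-- Let `A : Xⁿ → X` (`n > 1`) be continuous, symmetric and unanimous, and let
`ρ_* : π₁(X, x₀) → π₁(X, x₀)` send `[γ]` to `A_*([γ], [c], ..., [c])`, i.e. to
`A_* δ` where `δ ∈ π₁(Xⁿ)` has first coordinate `[γ]` and trivial remaining
coordinates (coordinates read through the projections `π₁(Xⁿ) → π₁(X)`).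
Then `n · ρ_*([γ]) = [γ]`, i.e. `(A_* δ)ⁿ = [γ]`. -/
theorem stmt9 {X : Type u} [TopologicalSpace X] (x₀ : X) (n : ℕ) (hn : 1 < n)
    (A : C((Fin n → X), X))
    (hsym : ∀ (σ : Equiv.Perm (Fin n)) (x : Fin n → X), A (x ∘ σ) = A x)
    (huna : ∀ x : X, A (fun _ => x) = x)
    (γ : FundamentalGroup X x₀)
    (δ : FundamentalGroup (Fin n → X) (fun _ => x₀))
    (hδ : ∀ i : Fin n,
      piOneMap ⟨fun x => x i, continuous_apply i⟩ (fun _ => x₀) x₀ rfl δ =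
        if i = (⟨0, by omega⟩ : Fin n) then γ else 1) :
    (piOneMap A (fun _ => x₀) x₀ (huna x₀) δ) ^ n = γ := by
  have : NeZero n := ⟨by omega⟩
  have hshift (k : Fin n) (p : FundamentalGroup (Fin n → X) fun _ => x₀) :
      piOneMap A _ x₀ (huna x₀) (piOneMap (cyclicShift k) _ (fun _ => x₀) rfl p) =
        piOneMap A _ x₀ (huna x₀) p :=
    piOneMap_piOneMap (cyclicShift k) A (ContinuousMap.ext fun x => hsym (Equiv.addRight k) x) p
  calc piOneMap A _ x₀ (huna x₀) δ ^ n
      = piOneMap A _ x₀ (huna x₀) (List.ofFn fun k : Fin n =>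
          piOneMap (cyclicShift k) _ (fun _ => x₀) rfl δ).prod := by
        rw [map_list_prod, List.map_ofFn]
        simp only [Function.comp_def, hshift, List.ofFn_const, List.prod_replicate]
    _ = piOneMap A _ x₀ (huna x₀)
          (piOneMap (ContinuousMap.constPi (Fin n)) x₀ (fun _ => x₀) rfl γ) := by
        rw [prod_ofFn_piOneMap_cyclicShift hδ]
    _ = γ :=
        piOneMap_piOneMap_of_comp_eq_id (ContinuousMap.constPi (Fin n)) A (ContinuousMap.ext huna) γ
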